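/- arXiv:1307.5881 — 3 statements merged into one kernel-verified Lean document; each statement's English description precedes it below -/
import Mathlib

section
/- For 0 < τ ≤ 1/2 and any bounded random variable ξ, e_τ(ξ) ≥ inf{E_Q[ξ] : dQ/dP ≤ (1−τ)/τ a.s.}; that is, the expectile dominates the tail expectation (CVaR) at threshold τ/(1−τ). -/
open MeasureTheory

/-!
Every density `h` of the expectile scenario set satisfies `a ≤ h ≤ ((1 - τ)/τ) a` with
`a ≤ ∫ h = 1`, so it also satisfies `0 ≤ h ≤ (1 - τ)/τ`: the expectile is an infimum over a
smaller set than the tail expectation. That set is nonempty (it contains `h = 1` because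
`(1 - τ)/τ ≥ 1`), and the larger one is bounded below by `-C`.
-/

section DensityExpectations

variable {Ω : Type*} [MeasurableSpace Ω]

theorem le_integral_of_ae_const_le {P : Measure Ω} [IsProbabilityMeasure P] {h : Ω → ℝ}
    {a : ℝ} (hint : Integrable h P) (ha : ∀ᵐ ω ∂P, a ≤ h ω) : a ≤ ∫ ω, h ω ∂P := by
  simpa using integral_mono_ae (integrable_const a) hint ha

def densityExpectations (P : Measure Ω) (ξ : Ω → ℝ) (p : (Ω → ℝ) → Prop) : Set ℝ :=
  {r | ∃ h : Ω → ℝ, Integrable h P ∧ (∫ ω, h ω ∂P = 1) ∧ p h ∧ r = ∫ ω, ξ ω * h ω ∂P}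

theorem densityExpectations_mono {P : Measure Ω} {ξ : Ω → ℝ} {p q : (Ω → ℝ) → Prop}
    (hpq : ∀ h, Integrable h P → ∫ ω, h ω ∂P = 1 → p h → q h) :
    densityExpectations P ξ p ⊆ densityExpectations P ξ q := by
  rintro r ⟨h, hint, hone, hp, rfl⟩
  exact ⟨h, hint, hone, hpq h hint hone hp, rfl⟩

theorem neg_le_integral_mul_of_abs_le {P : Measure Ω} {ξ h : Ω → ℝ} {C : ℝ}
    (hmeas : Measurable ξ) (hbdd : ∀ ω, |ξ ω| ≤ C) (hint : Integrable h P)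
    (hone : ∫ ω, h ω ∂P = 1) (hpos : ∀ᵐ ω ∂P, 0 ≤ h ω) :
    -C ≤ ∫ ω, ξ ω * h ω ∂P :=
  calc -C = ∫ ω, -C * h ω ∂P := by rw [integral_const_mul, hone, mul_one]
    _ ≤ ∫ ω, ξ ω * h ω ∂P := by
      refine integral_mono_ae (hint.const_mul _) (hint.bdd_mul hmeas.aestronglyMeasurable
        (.of_forall hbdd)) ?_
      filter_upwards [hpos] with ω hω
      exact mul_le_mul_of_nonneg_right (abs_le.mp (hbdd ω)).1 hω

theorem bddBelow_densityExpectations {P : Measure Ω} {ξ : Ω → ℝ} {p : (Ω → ℝ) → Prop}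
    {C : ℝ} (hmeas : Measurable ξ) (hbdd : ∀ ω, |ξ ω| ≤ C)
    (hpos : ∀ h, p h → ∀ᵐ ω ∂P, 0 ≤ h ω) :
    BddBelow (densityExpectations P ξ p) := by
  refine ⟨-C, ?_⟩
  rintro r ⟨h, hint, hone, hp, rfl⟩
  exact neg_le_integral_mul_of_abs_le hmeas hbdd hint hone (hpos h hp)

end DensityExpectations

/-- For `0 < τ ≤ 1/2` and bounded `ξ`, the expectile
`e_τ(ξ) = inf {E_Q[ξ] : Q ∈ S}` (with `S` the scenario set of densities `h` with
`a ≤ h ≤ ((1−τ)/τ) a` a.s. for some `a > 0`) dominates the tail expectation: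
`e_τ(ξ) ≥ inf {E_Q[ξ] : 0 ≤ dQ/dP ≤ (1−τ)/τ a.s.}`. -/
theorem stmt_5 {Ω : Type*} [MeasurableSpace Ω] (P : Measure Ω) [IsProbabilityMeasure P]
    (τ : ℝ) (hτ0 : 0 < τ) (hτ : τ ≤ 1 / 2)
    (ξ : Ω → ℝ) (hmeas : Measurable ξ) (C : ℝ) (hbdd : ∀ ω, |ξ ω| ≤ C) :
    sInf {r : ℝ | ∃ h : Ω → ℝ, Integrable h P ∧ (∫ ω, h ω ∂P = 1) ∧
        (∃ a > 0, ∀ᵐ ω ∂P, a ≤ h ω ∧ h ω ≤ (1 - τ) / τ * a) ∧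
        r = ∫ ω, ξ ω * h ω ∂P} ≥
      sInf {r : ℝ | ∃ h : Ω → ℝ, Integrable h P ∧ (∫ ω, h ω ∂P = 1) ∧
        (∀ᵐ ω ∂P, 0 ≤ h ω ∧ h ω ≤ (1 - τ) / τ) ∧
        r = ∫ ω, ξ ω * h ω ∂P} := by
  have hk : 1 ≤ (1 - τ) / τ := by rw [le_div_iff₀ hτ0]; linarith
  -- both sets are `densityExpectations P ξ _` definitionally
  refine csInf_le_csInf (bddBelow_densityExpectations hmeas hbdd fun h hh ↦ ?_) ?_
    (densityExpectations_mono fun h hint hone ⟨a, ha, hbound⟩ ↦ ?_)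
  · filter_upwards [hh] with ω hω using hω.1
  · refine ⟨∫ ω, ξ ω * 1 ∂P, fun _ ↦ 1, integrable_const 1, by simp, ⟨1, one_pos, ?_⟩, rfl⟩
    exact .of_forall fun _ ↦ ⟨le_rfl, by rwa [mul_one]⟩
  · have ha1 : a ≤ 1 := hone ▸ le_integral_of_ae_const_le hint (hbound.mono fun _ ↦ And.left)
    filter_upwards [hbound] with ω ⟨hlo, hhi⟩
    exact ⟨ha.le.trans hlo, hhi.trans (mul_le_of_le_one_right (by positivity) ha1)⟩
end

section
/- Let β = (1−τ)/τ ≥ 1 and S = {Q ≪ P : ∃ a > 0, a ≤ dQ/dP ≤ βa a.s.}. If a measurable set A satisfies 0 < P[A] < 1, then the probability measure Q with density dQ/dP = a·1_A + βa·1_{A^c}, where a = 1/(β·P[A^c] + P[A]), is an extreme point of the convex set S (identified with the set of its densities in L¹). -/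
/-!
On `A` the density equals `a = (f + g) / 2 ≥ (c_f + c_g) / 2`, while on `Aᶜ` it equals
`β a = (f + g) / 2 ≤ β (c_f + c_g) / 2`, where `c_f, c_g` are the lower bounds of `f, g`. Since both
sets have positive measure, `c_f + c_g = 2a`, and then `f` and `g` must sit at their lower bounds
on `A` and at their upper bounds on `Aᶜ`. So `f` is again two-valued, with level `c_f`, and the
normalisation `∫ f = 1` forces `c_f = a`.
-/

open scoped Classical

open MeasureTheory

section TwoLevel

variable {Ω : Type*} [MeasurableSpace Ω] {P : Measure Ω} {A : Set Ω} {β a : ℝ}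
  {f g : Ω → ℝ} {cf cg : ℝ}

noncomputable def twoLevel (A : Set Ω) (β c : ℝ) (ω : Ω) : ℝ := if ω ∈ A then c else β * c

def IsRatioBoundedDensity (P : Measure Ω) (β : ℝ) (g : Ω → ℝ) : Prop :=
  Integrable g P ∧ ∫ ω, g ω ∂P = 1 ∧ ∃ c > 0, ∀ᵐ ω ∂P, c ≤ g ω ∧ g ω ≤ β * c

lemma integral_twoLevel [IsFiniteMeasure P] (hA : MeasurableSet A) (β c : ℝ) :
    ∫ ω, twoLevel A β c ω ∂P = c * (P.real A + β * P.real Aᶜ) := by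
  change ∫ ω, A.piecewise (fun _ => c) (fun _ => β * c) ω ∂P = _
  rw [integral_piecewise hA (integrable_const c).integrableOn (integrable_const _).integrableOn,
    setIntegral_const, setIntegral_const, smul_eq_mul, smul_eq_mul]
  ring

lemma twoLevel_isRatioBoundedDensity [IsFiniteMeasure P] (hA : MeasurableSet A) (hβ : 1 ≤ β)
    (ha : 0 < a) (hnorm : a * (P.real A + β * P.real Aᶜ) = 1) :
    IsRatioBoundedDensity P β (twoLevel A β a) := by
  refine ⟨Integrable.piecewise hA (integrable_const a).integrableOn
    (integrable_const (β * a)).integrableOn,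
    (integral_twoLevel hA β a).trans hnorm, a, ha, .of_forall fun ω => ?_⟩
  have hle : a ≤ β * a := le_mul_of_one_le_left ha.le hβ
  unfold twoLevel
  split_ifs
  · exact ⟨le_rfl, hle⟩
  · exact ⟨hle, le_rfl⟩

lemma add_lower_bounds_eq_of_midpoint (hβ : 0 < β) (hA0 : P A ≠ 0) (hAc0 : P Aᶜ ≠ 0)
    (hf : ∀ᵐ ω ∂P, cf ≤ f ω ∧ f ω ≤ β * cf) (hg : ∀ᵐ ω ∂P, cg ≤ g ω ∧ g ω ≤ β * cg)
    (hmid : twoLevel A β a =ᵐ[P] fun ω => (f ω + g ω) / 2) :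
    cf + cg = 2 * a := by
  have hall := hmid.and (hf.and hg)
  obtain ⟨ω₁, hω₁, hm₁, ⟨hf₁, -⟩, hg₁, -⟩ :=
    Measure.exists_mem_of_measure_ne_zero_of_ae hA0 (ae_restrict_of_ae hall)
  obtain ⟨ω₂, hω₂, hm₂, ⟨-, hf₂⟩, -, hg₂⟩ :=
    Measure.exists_mem_of_measure_ne_zero_of_ae hAc0 (ae_restrict_of_ae hall)
  simp only [twoLevel, if_pos hω₁] at hm₁
  simp only [twoLevel, if_neg hω₂] at hm₂
  have hupper : β * (2 * a) ≤ β * (cf + cg) := by linarith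
  exact le_antisymm (by linarith) (le_of_mul_le_mul_left hupper hβ)

lemma ae_eq_twoLevel_of_midpoint (hβ : 0 < β) (hA0 : P A ≠ 0) (hAc0 : P Aᶜ ≠ 0)
    (hf : ∀ᵐ ω ∂P, cf ≤ f ω ∧ f ω ≤ β * cf) (hg : ∀ᵐ ω ∂P, cg ≤ g ω ∧ g ω ≤ β * cg)
    (hmid : twoLevel A β a =ᵐ[P] fun ω => (f ω + g ω) / 2) :
    f =ᵐ[P] twoLevel A β cf := by
  have hsum := add_lower_bounds_eq_of_midpoint hβ hA0 hAc0 hf hg hmid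
  have hβsum : β * cf + β * cg = 2 * (β * a) := by rw [← mul_add, hsum]; ring
  filter_upwards [hmid, hf, hg] with ω hm ⟨hf₁, hf₂⟩ ⟨hg₁, hg₂⟩
  unfold twoLevel at hm ⊢
  split_ifs at hm ⊢ <;> linarith

lemma IsRatioBoundedDensity.ae_eq_of_midpoint [IsFiniteMeasure P]
    (hA : MeasurableSet A) (hβ : 0 < β) (hA0 : P A ≠ 0) (hAc0 : P Aᶜ ≠ 0)
    (ha : ∫ ω, twoLevel A β a ω ∂P = 1)
    (hf : IsRatioBoundedDensity P β f) (hg : IsRatioBoundedDensity P β g)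
    (hmid : twoLevel A β a =ᵐ[P] fun ω => (f ω + g ω) / 2) :
    f =ᵐ[P] twoLevel A β a := by
  obtain ⟨-, hf1, cf, -, hfb⟩ := hf
  obtain ⟨-, -, cg, -, hgb⟩ := hg
  have hfeq := ae_eq_twoLevel_of_midpoint hβ hA0 hAc0 hfb hgb hmid
  rw [integral_congr_ae hfeq, integral_twoLevel hA] at hf1
  rw [integral_twoLevel hA] at ha
  have hcf : cf = a := mul_right_cancel₀ (right_ne_zero_of_mul_eq_one ha) (hf1.trans ha.symm)
  rwa [← hcf]

end TwoLevel

/-- Let `β = (1−τ)/τ` and let `S` be the set of probability densities `g` (w.r.t. `P`)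
with `c ≤ g ≤ β·c` a.s. for some `c > 0`.  If `0 < P[A] < 1`, then the density
`h = a·1_A + β·a·1_{Aᶜ}` with `a = 1/(β·P[Aᶜ] + P[A])` belongs to `S` and is an
extreme point of `S`: if `h = (f+g)/2` a.s. with `f, g ∈ S`, then `f = g = h` a.s. -/
theorem stmt_6 {Ω : Type*} [MeasurableSpace Ω] (P : Measure Ω) [IsProbabilityMeasure P]
    (τ : ℝ) (hτ0 : 0 < τ) (hτ : τ ≤ 1 / 2)
    (A : Set Ω) (hA : MeasurableSet A) (hA0 : 0 < P A) (hA1 : P A < 1) :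
    let β : ℝ := (1 - τ) / τ
    let a : ℝ := 1 / (β * (P Aᶜ).toReal + (P A).toReal)
    let h : Ω → ℝ := fun ω => if ω ∈ A then a else β * a
    let Sdens : (Ω → ℝ) → Prop := fun g =>
      Integrable g P ∧ (∫ ω, g ω ∂P = 1) ∧ ∃ c > 0, ∀ᵐ ω ∂P, c ≤ g ω ∧ g ω ≤ β * c
    Sdens h ∧
      ∀ f g : Ω → ℝ, Sdens f → Sdens g →
        (h =ᵐ[P] fun ω => (f ω + g ω) / 2) → f =ᵐ[P] h ∧ g =ᵐ[P] h := by
  intro β a h Sdens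
  have hβ : 1 ≤ β := by rw [le_div_iff₀ hτ0]; linarith
  have hAc0 : P Aᶜ ≠ 0 := by rw [Ne, prob_compl_eq_zero_iff hA]; exact hA1.ne
  have hPA : 0 < P.real A := ENNReal.toReal_pos hA0.ne' (measure_ne_top P A)
  have hnorm : a * (P.real A + β * P.real Aᶜ) = 1 := by
    simp only [a, ← measureReal_def]; field_simp; ring
  have hh : IsRatioBoundedDensity P β h :=
    twoLevel_isRatioBoundedDensity hA hβ (by positivity) hnorm
  have hint : ∫ ω, h ω ∂P = 1 := hh.2.1
  refine ⟨hh, fun f g hf hg hmid => ⟨?_, ?_⟩⟩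
  · exact IsRatioBoundedDensity.ae_eq_of_midpoint hA (by positivity) hA0.ne' hAc0 hint hf hg hmid
  · refine IsRatioBoundedDensity.ae_eq_of_midpoint hA (by positivity) hA0.ne' hAc0 hint hg hf ?_
    exact hmid.trans (.of_forall fun ω => by simp only [add_comm])
end

section
/- For 0 < τ ≤ 1/2 and β = (1−τ)/τ, if ξ and η are integrable with E[ξ] = E[η], then |e_τ(ξ) − e_τ(η)| ≤ ((β−1)/2)·E[|ξ − η|]. -/
open MeasureTheory

/-- The expectile `e_τ(ξ) = inf {E_Q[ξ] : Q ∈ S}` where `S` is the scenario set of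
probability densities `h` with `a ≤ h ≤ β·a` a.s. for some `a > 0`. -/
noncomputable def expectile {Ω : Type*} [MeasurableSpace Ω] (P : Measure Ω) (β : ℝ)
    (ξ : Ω → ℝ) : ℝ :=
  sInf {r : ℝ | ∃ h : Ω → ℝ, Integrable h P ∧ (∫ ω, h ω ∂P = 1) ∧
    (∃ a > 0, ∀ᵐ ω ∂P, a ≤ h ω ∧ h ω ≤ β * a) ∧ r = ∫ ω, ξ ω * h ω ∂P}

section Aux

variable {Ω : Type*} [MeasurableSpace Ω] {P : Measure Ω} [IsProbabilityMeasure P]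

lemma scen_a_le_one {h : Ω → ℝ} (hint : Integrable h P) (h1 : ∫ ω, h ω ∂P = 1)
    {a : ℝ} (hb : ∀ᵐ ω ∂P, a ≤ h ω) : a ≤ 1 := by
  have := integral_mono_ae (integrable_const a) hint hb
  rw [h1] at this
  simpa using this

lemma scen_bound {β : ℝ} (hβ : 1 ≤ β) {h : Ω → ℝ} (hint : Integrable h P)
    (h1 : ∫ ω, h ω ∂P = 1) {a : ℝ} (ha : 0 < a)
    (hb : ∀ᵐ ω ∂P, a ≤ h ω ∧ h ω ≤ β * a) : ∀ᵐ ω ∂P, ‖h ω‖ ≤ β := by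
  have ha1 : a ≤ 1 := scen_a_le_one hint h1 (hb.mono fun ω hω => hω.1)
  filter_upwards [hb] with ω hω
  rw [Real.norm_eq_abs, abs_le]
  constructor
  · nlinarith [hω.1, hω.2]
  · nlinarith [hω.1, hω.2]

lemma scen_integrable {β : ℝ} (hβ : 1 ≤ β) {ξ h : Ω → ℝ} (hξ : Integrable ξ P)
    (hint : Integrable h P) (h1 : ∫ ω, h ω ∂P = 1) {a : ℝ} (ha : 0 < a)
    (hb : ∀ᵐ ω ∂P, a ≤ h ω ∧ h ω ≤ β * a) : Integrable (fun ω => ξ ω * h ω) P := by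
  have := Integrable.bdd_mul (c := β) hξ hint.1 (scen_bound hβ hint h1 ha hb)
  exact this.congr (Filter.Eventually.of_forall fun ω => mul_comm _ _)

/-- Core estimate: for any scenario density `h`,
`|∫ ξ h − ∫ η h| ≤ ((β−1)/2) ∫ |ξ − η|` when means agree. -/
lemma scen_key {β : ℝ} (hβ : 1 ≤ β) {ξ η : Ω → ℝ} (hξ : Integrable ξ P)
    (hη : Integrable η P) (hmean : ∫ ω, ξ ω ∂P = ∫ ω, η ω ∂P)
    {h : Ω → ℝ} (hint : Integrable h P) (h1 : ∫ ω, h ω ∂P = 1) {a : ℝ} (ha : 0 < a)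
    (hb : ∀ᵐ ω ∂P, a ≤ h ω ∧ h ω ≤ β * a) :
    |(∫ ω, ξ ω * h ω ∂P) - ∫ ω, η ω * h ω ∂P| ≤ (β - 1) / 2 * ∫ ω, |ξ ω - η ω| ∂P := by
  have ha1 : a ≤ 1 := scen_a_le_one hint h1 (hb.mono fun ω hω => hω.1)
  set k : ℝ := (β + 1) * a / 2 with hk
  -- a.e. bound on |h - k|
  have hdev : ∀ᵐ ω ∂P, ‖h ω - k‖ ≤ (β - 1) / 2 := by
    filter_upwards [hb] with ω hω
    rw [Real.norm_eq_abs, abs_le]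
    constructor
    · nlinarith [hω.1, hω.2]
    · nlinarith [hω.1, hω.2]
  have hdiff : Integrable (fun ω => ξ ω - η ω) P := hξ.sub hη
  have hIprod : Integrable (fun ω => (h ω - k) * (ξ ω - η ω)) P :=
    Integrable.bdd_mul hdiff ((hint.sub (integrable_const k)).1) hdev
  have hIξh : Integrable (fun ω => ξ ω * h ω) P := scen_integrable hβ hξ hint h1 ha hb
  have hIηh : Integrable (fun ω => η ω * h ω) P := scen_integrable hβ hη hint h1 ha hb
  have hIkd : Integrable (fun ω => k * (ξ ω - η ω)) P := hdiff.const_mul k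
  have hIsub : Integrable (fun ω => ξ ω * h ω - η ω * h ω) P := hIξh.sub hIηh
  have heq : (∫ ω, (h ω - k) * (ξ ω - η ω) ∂P)
      = (∫ ω, ξ ω * h ω ∂P) - ∫ ω, η ω * h ω ∂P := by
    have e1 : (fun ω => (h ω - k) * (ξ ω - η ω))
        = fun ω => (ξ ω * h ω - η ω * h ω) - k * (ξ ω - η ω) := by
      funext ω; ring
    rw [e1, integral_sub hIsub hIkd, integral_sub hIξh hIηh,
      integral_const_mul, integral_sub hξ hη, hmean]
    ring
  rw [← heq]
  calc |∫ ω, (h ω - k) * (ξ ω - η ω) ∂P| ≤ ∫ ω, |(h ω - k) * (ξ ω - η ω)| ∂P := by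
        simpa only [Real.norm_eq_abs] using
          norm_integral_le_integral_norm (fun ω => (h ω - k) * (ξ ω - η ω)) (μ := P)
    _ ≤ ∫ ω, (β - 1) / 2 * |ξ ω - η ω| ∂P := by
        refine integral_mono_ae hIprod.abs (hdiff.abs.const_mul _) ?_
        filter_upwards [hdev] with ω hω
        rw [abs_mul]
        exact mul_le_mul_of_nonneg_right hω (abs_nonneg _)
    _ = (β - 1) / 2 * ∫ ω, |ξ ω - η ω| ∂P := integral_const_mul _ _

lemma expectile_set_nonempty {β : ℝ} (hβ : 1 ≤ β) (ξ : Ω → ℝ) :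
    {r : ℝ | ∃ h : Ω → ℝ, Integrable h P ∧ (∫ ω, h ω ∂P = 1) ∧
      (∃ a > 0, ∀ᵐ ω ∂P, a ≤ h ω ∧ h ω ≤ β * a) ∧ r = ∫ ω, ξ ω * h ω ∂P}.Nonempty := by
  refine ⟨∫ ω, ξ ω ∂P, fun _ => 1, integrable_const 1, by simp, ⟨1, one_pos, ?_⟩, by simp⟩
  exact Filter.Eventually.of_forall fun ω => ⟨le_rfl, by simpa using hβ⟩

lemma expectile_set_bddBelow {β : ℝ} (hβ : 1 ≤ β) {ξ : Ω → ℝ} (hξ : Integrable ξ P) :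
    BddBelow {r : ℝ | ∃ h : Ω → ℝ, Integrable h P ∧ (∫ ω, h ω ∂P = 1) ∧
      (∃ a > 0, ∀ᵐ ω ∂P, a ≤ h ω ∧ h ω ≤ β * a) ∧ r = ∫ ω, ξ ω * h ω ∂P} := by
  refine ⟨-(β * ∫ ω, |ξ ω| ∂P), fun r hr => ?_⟩
  obtain ⟨h, hint, h1, ⟨a, ha, hb⟩, hr⟩ := hr
  have hI : Integrable (fun ω => ξ ω * h ω) P := scen_integrable hβ hξ hint h1 ha hb
  have habs : |∫ ω, ξ ω * h ω ∂P| ≤ β * ∫ ω, |ξ ω| ∂P := by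
    calc |∫ ω, ξ ω * h ω ∂P| ≤ ∫ ω, |ξ ω * h ω| ∂P := by
          simpa only [Real.norm_eq_abs] using
            norm_integral_le_integral_norm (fun ω => ξ ω * h ω) (μ := P)
      _ ≤ ∫ ω, β * |ξ ω| ∂P := by
          refine integral_mono_ae hI.abs (hξ.abs.const_mul _) ?_
          filter_upwards [scen_bound hβ hint h1 ha hb] with ω hω
          rw [abs_mul, mul_comm β _]
          exact mul_le_mul_of_nonneg_left (by simpa only [Real.norm_eq_abs] using hω) (abs_nonneg _)
      _ = β * ∫ ω, |ξ ω| ∂P := integral_const_mul _ _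
  rw [hr]
  linarith [neg_abs_le (∫ ω, ξ ω * h ω ∂P)]

lemma expectile_step {β : ℝ} (hβ : 1 ≤ β) {ξ η : Ω → ℝ} (hξ : Integrable ξ P)
    (hη : Integrable η P) (hmean : ∫ ω, ξ ω ∂P = ∫ ω, η ω ∂P) :
    expectile P β ξ ≤ expectile P β η + (β - 1) / 2 * ∫ ω, |ξ ω - η ω| ∂P := by
  set C := (β - 1) / 2 * ∫ ω, |ξ ω - η ω| ∂P with hC
  rw [expectile, expectile, ← sub_le_iff_le_add]
  refine le_csInf (expectile_set_nonempty hβ η) fun r hr => ?_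
  obtain ⟨h, hint, h1, ⟨a, ha, hb⟩, hr⟩ := hr
  have hmem : (∫ ω, ξ ω * h ω ∂P) ∈ {r : ℝ | ∃ h : Ω → ℝ, Integrable h P ∧
      (∫ ω, h ω ∂P = 1) ∧ (∃ a > 0, ∀ᵐ ω ∂P, a ≤ h ω ∧ h ω ≤ β * a) ∧
      r = ∫ ω, ξ ω * h ω ∂P} := ⟨h, hint, h1, ⟨a, ha, hb⟩, rfl⟩
  have h1' := csInf_le (expectile_set_bddBelow hβ hξ) hmem
  have h2 := scen_key hβ hξ hη hmean hint h1 ha hb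
  rw [abs_le] at h2
  rw [hr]
  linarith [h1', h2.2]

end Aux

/-- For `0 < τ ≤ 1/2` and `β = (1−τ)/τ`, the expectile is Lipschitz for the `L¹` norm
on random variables with equal mean, with constant `(β−1)/2`. -/
theorem stmt_17 {Ω : Type*} [MeasurableSpace Ω] (P : Measure Ω) [IsProbabilityMeasure P]
    (τ : ℝ) (hτ0 : 0 < τ) (hτ : τ ≤ 1 / 2)
    (ξ η : Ω → ℝ) (hξm : Measurable ξ) (hηm : Measurable η)
    (hξ : Integrable ξ P) (hη : Integrable η P)
    (hmean : ∫ ω, ξ ω ∂P = ∫ ω, η ω ∂P) :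
    |expectile P ((1 - τ) / τ) ξ - expectile P ((1 - τ) / τ) η| ≤
      ((1 - τ) / τ - 1) / 2 * ∫ ω, |ξ ω - η ω| ∂P := by
  set β := (1 - τ) / τ with hβdef
  have hβ : 1 ≤ β := by
    rw [hβdef, le_div_iff₀ hτ0]
    linarith
  have hswap : (∫ ω, |η ω - ξ ω| ∂P) = ∫ ω, |ξ ω - η ω| ∂P := by
    congr 1; funext ω; rw [abs_sub_comm]
  have h1 := expectile_step hβ hξ hη hmean
  have h2 := expectile_step hβ hη hξ hmean.symm
  rw [hswap] at h2
  rw [abs_le]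
  constructor <;> linarith
end
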